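/- arXiv:2201.04730 — 5 statements merged into one kernel-verified Lean document; each statement's English description precedes it below -/
import Mathlib

section
/- Let R1, R2, R3, R4 be four distinct simple graphs on the same finite vertex set, pairwise related by a single 2-switch. Then there do not exist two edges e and f such that both e and f belong to R1 and to R2 but belong to neither R3 nor R4. -/
/-- Two unordered vertex pairs {a,b} and {c,d} are equal. -/
def pairEq {V : Type*} (a b c d : V) : Prop := (a = c ∧ b = d) ∨ (a = d ∧ b = c)

/-- `G'` is obtained from `G` by the 2-switch on the alternating 4-cycle `[u,v : w,x]`:
`uv, wx` are edges of `G`, `ux, vw` are non-edges, the four vertices are distinct, and the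
adjacency of exactly these four pairs is toggled. -/
def IsTwoSwitchAt {V : Type*} (G G' : SimpleGraph V) (u v w x : V) : Prop :=
  u ≠ v ∧ u ≠ w ∧ u ≠ x ∧ v ≠ w ∧ v ≠ x ∧ w ≠ x ∧
  G.Adj u v ∧ G.Adj w x ∧ ¬ G.Adj u x ∧ ¬ G.Adj v w ∧
  ∀ a b, G'.Adj a b ↔
    Xor' (G.Adj a b) (pairEq a b u v ∨ pairEq a b w x ∨ pairEq a b u x ∨ pairEq a b v w)

/-- `G'` is obtained from `G` by a single 2-switch. -/
def IsTwoSwitch {V : Type*} (G G' : SimpleGraph V) : Prop :=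
  ∃ u v w x, IsTwoSwitchAt G G' u v w x

/-- The degree of `y` in `G`, as the number of neighbors. -/
noncomputable def ndeg {V : Type*} (G : SimpleGraph V) (y : V) : ℕ := (G.neighborSet y).ncard

/-!
Each of the four switches `R i → R j` with `i ∈ {0, 1}`, `j ∈ {2, 3}` deletes both `e = ab` and
`f = cd`, so it is the switch `[a,b : c,d]` or `[a,b : d,c]`. Two switches into the same graph, or
out of the same graph, with the same orientation would identify two of the `R i`; so `R 0 → R 2`
and `R 1 → R 3` have one orientation, `R 1 → R 2` and `R 0 → R 3` the other. Say `R 0 → R 2` is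
`[a,b : c,d]`: it creates `ad`, which `R 1 → R 2 = [a,b : d,c]` does not touch, so `ad ∈ R 1`,
whereas `R 1 → R 3 = [a,b : c,d]` needs `ad ∉ R 1`.
-/

section pairEq

variable {V : Type*} {a b c d u v : V}

lemma pairEq_swap_right : pairEq a b u v ↔ pairEq a b v u := by
  unfold pairEq; tauto

lemma pairEq_trans (h₁ : pairEq a b u v) (h₂ : pairEq c d u v) : pairEq a b c d := by
  rcases h₁ with ⟨rfl, rfl⟩ | ⟨rfl, rfl⟩ <;> rcases h₂ with ⟨rfl, rfl⟩ | ⟨rfl, rfl⟩ <;>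
    simp [pairEq]

lemma SimpleGraph.Adj.of_pairEq {G : SimpleGraph V} (hab : G.Adj a b) (h : pairEq a b u v) :
    G.Adj u v := by
  rcases h with ⟨rfl, rfl⟩ | ⟨rfl, rfl⟩
  exacts [hab, hab.symm]

end pairEq

namespace IsTwoSwitchAt

variable {V : Type*} {G G' G₀ G₁ G₂ G₃ : SimpleGraph V} {a b c d u v w x : V}

lemma adj_iff (h : IsTwoSwitchAt G G' u v w x) (p q : V) : G'.Adj p q ↔
    Xor (G.Adj p q) (pairEq p q u v ∨ pairEq p q w x ∨ pairEq p q u x ∨ pairEq p q v w) :=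
  h.2.2.2.2.2.2.2.2.2.2 p q

lemma swap (h : IsTwoSwitchAt G G' u v w x) : IsTwoSwitchAt G G' w x u v := by
  obtain ⟨huv, huw, hux, hvw, hvx, hwx, hGuv, hGwx, hGux, hGvw, hiff⟩ := h
  refine ⟨hwx, huw.symm, hvw.symm, hux.symm, hvx.symm, huv, hGwx, hGuv,
    fun h ↦ hGvw h.symm, fun h ↦ hGux h.symm, fun p q ↦ (hiff p q).trans ?_⟩
  rw [@pairEq_swap_right _ p q w v, @pairEq_swap_right _ p q x u, or_left_comm,
    or_comm (a := pairEq p q u x)]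

lemma rev (h : IsTwoSwitchAt G G' u v w x) : IsTwoSwitchAt G G' v u x w := by
  obtain ⟨huv, huw, hux, hvw, hvx, hwx, hGuv, hGwx, hGux, hGvw, hiff⟩ := h
  refine ⟨huv.symm, hvx, hvw, hux, huw, hwx.symm, hGuv.symm, hGwx.symm,
    hGvw, hGux, fun p q ↦ (hiff p q).trans ?_⟩
  rw [@pairEq_swap_right _ p q u v, @pairEq_swap_right _ p q w x,
    or_comm (a := pairEq p q u x)]

lemma pairEq_of_adj_of_not_adj (h : IsTwoSwitchAt G G' u v w x) (hab : G.Adj a b)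
    (hab' : ¬ G'.Adj a b) : pairEq a b u v ∨ pairEq a b w x := by
  have hmem : pairEq a b u v ∨ pairEq a b w x ∨ pairEq a b u x ∨ pairEq a b v w := by
    by_contra hP
    exact hab' ((h.adj_iff a b).mpr (Or.inl ⟨hab, hP⟩))
  obtain ⟨-, -, -, -, -, -, -, -, hux, hvw, -⟩ := h
  rcases hmem with h' | h' | h' | h'
  · exact .inl h'
  · exact .inr h'
  · exact absurd (hab.of_pairEq h') hux
  · exact absurd (hab.of_pairEq h') hvw

lemma orient (h : IsTwoSwitchAt G G' u v w x) (hab : pairEq a b u v) (hcd : pairEq c d w x) :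
    IsTwoSwitchAt G G' a b c d ∨ IsTwoSwitchAt G G' a b d c := by
  rcases hab with ⟨rfl, rfl⟩ | ⟨rfl, rfl⟩ <;> rcases hcd with ⟨rfl, rfl⟩ | ⟨rfl, rfl⟩
  exacts [.inl h, .inr h, .inr h.rev, .inl h.rev]

lemma left_unique (h₀ : IsTwoSwitchAt G₀ G' u v w x) (h₁ : IsTwoSwitchAt G₁ G' u v w x) :
    G₀ = G₁ := by
  ext p q
  have h := (h₀.adj_iff p q).symm.trans (h₁.adj_iff p q)
  grind

lemma right_unique (h₁ : IsTwoSwitchAt G G₁ u v w x) (h₂ : IsTwoSwitchAt G G₂ u v w x) :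
    G₁ = G₂ := by
  ext p q
  rw [h₁.adj_iff, h₂.adj_iff]

lemma not_isTwoSwitchAt_of_isTwoSwitchAt_swapped (h₀₂ : IsTwoSwitchAt G₀ G₂ a b c d)
    (h₁₂ : IsTwoSwitchAt G₁ G₂ a b d c) : ¬ IsTwoSwitchAt G₁ G₃ a b c d := by
  obtain ⟨hab, hac, had, -, hbd, hcd, -, -, had₀, -, -⟩ := id h₀₂
  have had₂ : G₂.Adj a d := (h₀₂.adj_iff a d).2 (by simp [xor_def, pairEq, had₀])
  have had₁ : G₁.Adj a d := by
    simpa [xor_def, pairEq, had₂, hab, hac, had, hbd.symm, hcd.symm] using h₁₂.adj_iff a d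
  rintro ⟨-, -, -, -, -, -, -, -, had₁', -, -⟩
  exact had₁' had₁

lemma eq_or_eq_of_isTwoSwitchAt (h₀₂ : IsTwoSwitchAt G₀ G₂ a b c d)
    (h₁₂ : IsTwoSwitchAt G₁ G₂ a b c d ∨ IsTwoSwitchAt G₁ G₂ a b d c)
    (h₀₃ : IsTwoSwitchAt G₀ G₃ a b c d ∨ IsTwoSwitchAt G₀ G₃ a b d c)
    (h₁₃ : IsTwoSwitchAt G₁ G₃ a b c d ∨ IsTwoSwitchAt G₁ G₃ a b d c) :
    G₀ = G₁ ∨ G₂ = G₃ := by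
  rcases h₁₂ with h₁₂ | h₁₂
  · exact .inl (h₀₂.left_unique h₁₂)
  rcases h₀₃ with h₀₃ | h₀₃
  · exact .inr (h₀₂.right_unique h₀₃)
  rcases h₁₃ with h₁₃ | h₁₃
  · exact absurd h₁₃ (not_isTwoSwitchAt_of_isTwoSwitchAt_swapped h₀₂ h₁₂)
  · exact .inr (h₁₂.right_unique h₁₃)

end IsTwoSwitchAt

lemma IsTwoSwitch.isTwoSwitchAt_or {V : Type*} {G G' : SimpleGraph V} {a b c d : V}
    (h : IsTwoSwitch G G') (hab : G.Adj a b) (hcd : G.Adj c d) (hab' : ¬ G'.Adj a b)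
    (hcd' : ¬ G'.Adj c d) (hef : s(a, b) ≠ s(c, d)) :
    IsTwoSwitchAt G G' a b c d ∨ IsTwoSwitchAt G G' a b d c := by
  obtain ⟨u, v, w, x, h⟩ := h
  have hne : ¬ pairEq a b c d := fun h ↦ hef (Sym2.eq_iff.2 h)
  rcases h.pairEq_of_adj_of_not_adj hab hab' with ha | ha <;>
    rcases h.pairEq_of_adj_of_not_adj hcd hcd' with hc | hc
  · exact absurd (pairEq_trans ha hc) hne
  · exact h.orient ha hc
  · exact h.swap.orient ha hc
  · exact absurd (pairEq_trans ha hc) hne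

theorem no_two_shared_private_edges_general {V : Type*} (R : Fin 4 → SimpleGraph V)
    (hdist : ∀ i j, i ≠ j → R i ≠ R j)
    (hsw : ∀ i j, i ≠ j → IsTwoSwitch (R i) (R j)) :
    ¬ ∃ e f : Sym2 V, e ≠ f ∧
      e ∈ (R 0).edgeSet ∧ e ∈ (R 1).edgeSet ∧ e ∉ (R 2).edgeSet ∧ e ∉ (R 3).edgeSet ∧
      f ∈ (R 0).edgeSet ∧ f ∈ (R 1).edgeSet ∧ f ∉ (R 2).edgeSet ∧ f ∉ (R 3).edgeSet := by
  rintro ⟨e, f, hef, he0, he1, he2, he3, hf0, hf1, hf2, hf3⟩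
  induction e using Sym2.ind with | h a b => ?_
  induction f using Sym2.ind with | h c d => ?_
  have h₀₂ := (hsw 0 2 (by decide)).isTwoSwitchAt_or he0 hf0 he2 hf2 hef
  have h₀₃ := (hsw 0 3 (by decide)).isTwoSwitchAt_or he0 hf0 he3 hf3 hef
  have h₁₂ := (hsw 1 2 (by decide)).isTwoSwitchAt_or he1 hf1 he2 hf2 hef
  have h₁₃ := (hsw 1 3 (by decide)).isTwoSwitchAt_or he1 hf1 he3 hf3 hef
  refine (?_ : R 0 = R 1 ∨ R 2 = R 3).elim (hdist 0 1 (by decide)) (hdist 2 3 (by decide))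
  rcases h₀₂ with h₀₂ | h₀₂
  · exact h₀₂.eq_or_eq_of_isTwoSwitchAt h₁₂ h₀₃ h₁₃
  · exact h₀₂.eq_or_eq_of_isTwoSwitchAt h₁₂.symm h₀₃.symm h₁₃.symm

/-- four distinct graphs pairwise related by a single 2-switch cannot have two
edges `e ≠ f` that both lie in `R 0` and `R 1` but in neither `R 2` nor `R 3`. -/
theorem no_two_shared_private_edges {V : Type*} [Fintype V] (R : Fin 4 → SimpleGraph V)
    (hdist : ∀ i j, i ≠ j → R i ≠ R j)
    (hsw : ∀ i j, i ≠ j → IsTwoSwitch (R i) (R j)) :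
    ¬ ∃ e f : Sym2 V, e ≠ f ∧
      e ∈ (R 0).edgeSet ∧ e ∈ (R 1).edgeSet ∧ e ∉ (R 2).edgeSet ∧ e ∉ (R 3).edgeSet ∧
      f ∈ (R 0).edgeSet ∧ f ∈ (R 1).edgeSet ∧ f ∉ (R 2).edgeSet ∧ f ∉ (R 3).edgeSet :=
  no_two_shared_private_edges_general R hdist hsw
end

section
/- Let R1, R2, R3, R4 be four distinct simple graphs on the same finite vertex set, pairwise related by a single 2-switch. Then there cannot exist an edge e12 lying in R1 and R2 but in neither R3 nor R4, and simultaneously an edge e13 lying in R1 and R3 but in neither R2 nor R4. -/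
lemma adj_of_pairEq {V : Type*} {G : SimpleGraph V} {a b c d : V}
    (h : pairEq a b c d) (hadj : G.Adj c d) : G.Adj a b := by
  rcases h with ⟨rfl, rfl⟩ | ⟨rfl, rfl⟩
  · exact hadj
  · exact hadj.symm

lemma adj_of_pairEq' {V : Type*} {G : SimpleGraph V} {a b c d : V}
    (h : pairEq a b c d) (hadj : G.Adj a b) : G.Adj c d := by
  rcases h with ⟨rfl, rfl⟩ | ⟨rfl, rfl⟩
  · exact hadj
  · exact hadj.symm

lemma lost_pair {V : Type*} {G G' : SimpleGraph V} {u v w x a b : V}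
    (h : IsTwoSwitchAt G G' u v w x) (h1 : G.Adj a b) (h2 : ¬ G'.Adj a b) :
    pairEq a b u v ∨ pairEq a b w x := by
  obtain ⟨_,_,_,_,_,_,huv,hwx,hux,hvw,hiff⟩ := h
  have hnx := (hiff a b).not.mp h2
  have hQ : pairEq a b u v ∨ pairEq a b w x ∨ pairEq a b u x ∨ pairEq a b v w := by
    by_contra hq; exact hnx (Or.inl ⟨h1, hq⟩)
  rcases hQ with h|h|h|h
  · exact Or.inl h
  · exact Or.inr h
  · exact absurd (adj_of_pairEq' h h1) hux
  · exact absurd (adj_of_pairEq' h h1) hvw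

lemma gained_pair {V : Type*} {G G' : SimpleGraph V} {u v w x a b : V}
    (h : IsTwoSwitchAt G G' u v w x) (h1 : ¬ G.Adj a b) (h2 : G'.Adj a b) :
    pairEq a b u x ∨ pairEq a b v w := by
  obtain ⟨_,_,_,_,_,_,huv,hwx,hux,hvw,hiff⟩ := h
  have hx := (hiff a b).mp h2
  have hQ : pairEq a b u v ∨ pairEq a b w x ∨ pairEq a b u x ∨ pairEq a b v w := by
    rcases hx with ⟨hp, _⟩ | ⟨hq, _⟩
    · exact absurd hp h1
    · exact hq
  rcases hQ with h|h|h|h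
  · exact absurd (adj_of_pairEq h huv) h1
  · exact absurd (adj_of_pairEq h hwx) h1
  · exact Or.inl h
  · exact Or.inr h

lemma pairEq.trans_pairEq {V : Type*} {a b c d u v : V}
    (h : pairEq a b u v) (h' : pairEq c d u v) : pairEq a b c d := by
  rcases h with ⟨rfl, rfl⟩ | ⟨rfl, rfl⟩ <;> rcases h' with ⟨rfl, rfl⟩ | ⟨rfl, rfl⟩ <;>
    first | exact Or.inl ⟨rfl, rfl⟩ | exact Or.inr ⟨rfl, rfl⟩

/-- four distinct graphs pairwise related by a single 2-switch cannot have both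
an edge in exactly `R 0, R 1` and an edge in exactly `R 0, R 2`. -/
theorem no_overlapping_pair_edges {V : Type*} [Fintype V] (R : Fin 4 → SimpleGraph V)
    (hdist : ∀ i j, i ≠ j → R i ≠ R j)
    (hsw : ∀ i j, i ≠ j → IsTwoSwitch (R i) (R j)) :
    ¬ ∃ e12 e13 : Sym2 V,
      (e12 ∈ (R 0).edgeSet ∧ e12 ∈ (R 1).edgeSet ∧ e12 ∉ (R 2).edgeSet ∧ e12 ∉ (R 3).edgeSet) ∧
      (e13 ∈ (R 0).edgeSet ∧ e13 ∈ (R 2).edgeSet ∧ e13 ∉ (R 1).edgeSet ∧ e13 ∉ (R 3).edgeSet) := by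
  rintro ⟨e12, e13, h12, h13⟩
  induction e12 using Sym2.ind with | _ a b =>
  induction e13 using Sym2.ind with | _ c d =>
  simp only [SimpleGraph.mem_edgeSet] at h12 h13
  obtain ⟨h0ab, h1ab, h2ab, h3ab⟩ := h12
  obtain ⟨h0cd, h2cd, h1cd, h3cd⟩ := h13
  -- from the switch between R0 and R3: e12 and e13 are among the two disjoint lost pairs
  obtain ⟨u, v, w, x, hS⟩ := hsw 0 3 (by decide)
  obtain ⟨huv, huw, hux, hvw, hvx, hwx, -⟩ := id hS
  have hab03 := lost_pair hS h0ab h3ab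
  have hcd03 := lost_pair hS h0cd h3cd
  -- e12 ≠ e13 as pairs
  have hne : ¬ pairEq a b c d := fun h => h1cd (adj_of_pairEq' h h1ab)
  -- hence {a,b} and {c,d} are disjoint
  have hdisj : a ≠ c ∧ a ≠ d ∧ b ≠ c ∧ b ≠ d := by
    rcases hab03 with h | h <;> rcases hcd03 with h' | h'
    · exact absurd (h.trans_pairEq h') hne
    · rcases h with ⟨rfl, rfl⟩ | ⟨rfl, rfl⟩ <;>
        rcases h' with ⟨rfl, rfl⟩ | ⟨rfl, rfl⟩ <;>
        exact ⟨by assumption, by assumption, by assumption, by assumption⟩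
    · rcases h with ⟨rfl, rfl⟩ | ⟨rfl, rfl⟩ <;>
        rcases h' with ⟨rfl, rfl⟩ | ⟨rfl, rfl⟩ <;>
        refine ⟨?_, ?_, ?_, ?_⟩ <;> first | assumption | (intro he; exact absurd he.symm (by assumption))
    · exact absurd (h.trans_pairEq h') hne
  -- from the switch between R1 and R2: e12 and e13 share a vertex
  obtain ⟨p, q, r, s, hT⟩ := hsw 1 2 (by decide)
  have hab12 := lost_pair hT h1ab h2ab
  have hcd12 := gained_pair hT h1cd h2cd
  obtain ⟨hac, had, hbc, hbd⟩ := hdisj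
  rcases hab12 with h | h <;> rcases hcd12 with h' | h' <;>
    rcases h with ⟨rfl, rfl⟩ | ⟨rfl, rfl⟩ <;>
    rcases h' with ⟨h1, h2⟩ | ⟨h1, h2⟩ <;>
    simp_all
end

section
/- Let R1, R2, R3, R4 be four distinct simple graphs on the same finite vertex set V, pairwise related by a single 2-switch, each with m edges. For each nonempty proper subset I of {1,2,3,4}, let s_I be the number of vertex pairs that are edges in exactly the realizations R_i with i in I. Then for each i in {1,2,3,4}, s_{{i}} = 1 and s_{{1,2,3,4}\{i}} = 1, and s_I = 0 whenever |I| = 2. -/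
/-!
Fix one realization `A` and let `P_j = A \ R_j`, `Q_j = R_j \ A` be the pairs removed and added
by the 2-switch `A → R_j`. Since `R_j → R_k` is a 2-switch too, `|P_j ∩ P_k| + |Q_j ∩ Q_k| = 2`.
No two switches from `A` remove the same pair `P`: their added pairs would be the two other
perfect matchings on the vertices of `P`, and the third switch could neither remove `P` (there is
no third such matching) nor share a pair with each of them (its added pairs are disjoint, while
every pair of one matching meets every pair of the other). Dually no two add the same pair, so
each `P_j ∩ P_k` is a single pair `x_jk`, and these agree: if `x₁₂ ≠ x₁₃`, then `x₂₃` is removed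
and `x₁₃` added by `R₁ → R₂`, so they meet, although both are removed by `A → R₃`. This common
removed pair is the only pair in the region `{A}` and it empties each region `{A, R_j}`;
complementing all edge sets handles `{A}ᶜ`.
-/

namespace Sym2

variable {V : Type*}

def crossPairs (p q : Sym2 V) : Set (Sym2 V) :=
  {e | ¬Disjoint (e : Set V) p ∧ ¬Disjoint (e : Set V) q}

lemma eq_of_mem_crossPairs_of_disjoint {p q a b c : Sym2 V} (hpq : Disjoint (p : Set V) q)
    (ha : a ∈ crossPairs p q) (hb : b ∈ crossPairs p q) (hc : c ∈ crossPairs p q)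
    (hba : Disjoint (b : Set V) a) (hca : Disjoint (c : Set V) a) : b = c := by
  obtain ⟨⟨x, hxa, hxp⟩, ⟨y, hya, hyq⟩⟩ :=
    And.imp Set.not_disjoint_iff.1 Set.not_disjoint_iff.1 ha
  obtain ⟨⟨z, hzb, hzp⟩, ⟨w, hwb, hwq⟩⟩ :=
    And.imp Set.not_disjoint_iff.1 Set.not_disjoint_iff.1 hb
  obtain ⟨⟨z', hzc, hzp'⟩, ⟨w', hwc, hwq'⟩⟩ :=
    And.imp Set.not_disjoint_iff.1 Set.not_disjoint_iff.1 hc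
  have eq_of_ne : ∀ {e : Sym2 V} {x z z' : V}, x ∈ e → z ∈ e → z' ∈ e → z ≠ x → z' ≠ x →
      z' = z := by
    intro e x z z' hx hz hz' hzx hz'x
    rw [(mem_and_mem_iff hzx.symm).1 ⟨hx, hz⟩, mem_iff] at hz'
    exact hz'.resolve_left hz'x
  have hzx : z ≠ x := by rintro rfl; exact Set.disjoint_left.1 hba hzb hxa
  have hz'x : z' ≠ x := by rintro rfl; exact Set.disjoint_left.1 hca hzc hxa
  have hwy : w ≠ y := by rintro rfl; exact Set.disjoint_left.1 hba hwb hya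
  have hw'y : w' ≠ y := by rintro rfl; exact Set.disjoint_left.1 hca hwc hya
  have hzw : z ≠ w := by rintro rfl; exact Set.disjoint_left.1 hpq hzp hwq
  obtain rfl := eq_of_ne hxp hzp hzp' hzx hz'x
  obtain rfl := eq_of_ne hyq hwq hwq' hwy hw'y
  rw [(mem_and_mem_iff hzw).1 ⟨hzb, hwb⟩, (mem_and_mem_iff hzw).1 ⟨hzc, hwc⟩]

lemma crossPairs_subset {x₁ x₂ y₁ y₂ : V} (h : Disjoint (s(x₁, x₂) : Set V) s(y₁, y₂)) :
    crossPairs s(x₁, x₂) s(y₁, y₂) ⊆ {s(x₁, y₁), s(x₁, y₂), s(x₂, y₁), s(x₂, y₂)} := by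
  rintro e ⟨hp, hq⟩
  obtain ⟨z, hze, hzp⟩ := Set.not_disjoint_iff.1 hp
  obtain ⟨w, hwe, hwq⟩ := Set.not_disjoint_iff.1 hq
  have hzw : z ≠ w := by rintro rfl; exact Set.disjoint_left.1 h hzp hwq
  rw [(mem_and_mem_iff hzw).1 ⟨hze, hwe⟩]
  rw [SetLike.mem_coe, mem_iff] at hzp hwq
  rcases hzp with rfl | rfl <;> rcases hwq with rfl | rfl <;> simp

lemma crossPairs_finite {p q : Sym2 V} (h : Disjoint (p : Set V) q) :
    (crossPairs p q).Finite := by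
  induction p using Sym2.ind with | _ x₁ x₂ =>
  induction q using Sym2.ind with | _ y₁ y₂ =>
  exact (Set.toFinite _).subset (crossPairs_subset h)

lemma ncard_crossPairs_le {p q : Sym2 V} (h : Disjoint (p : Set V) q) :
    (crossPairs p q).ncard ≤ 4 := by
  induction p using Sym2.ind with | _ x₁ x₂ =>
  induction q using Sym2.ind with | _ y₁ y₂ =>
  refine (Set.ncard_le_ncard (crossPairs_subset h)).trans ?_
  have := Set.ncard_insert_le s(x₁, y₁) {s(x₁, y₂), s(x₂, y₁), s(x₂, y₂)}
  have := Set.ncard_insert_le s(x₁, y₂) {s(x₂, y₁), s(x₂, y₂)}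
  have := Set.ncard_insert_le s(x₂, y₁) {s(x₂, y₂)}
  have := Set.ncard_singleton s(x₂, y₂)
  omega

end Sym2

section

open Sym2

open scoped symmDiff

variable {V : Type*}

def IsDisjointPair (X : Set (Sym2 V)) : Prop :=
  ∃ p q : Sym2 V, Disjoint (p : Set V) q ∧ X = {p, q}

namespace IsDisjointPair

variable {X Y : Set (Sym2 V)}

lemma ncard_eq (h : IsDisjointPair X) : X.ncard = 2 := by
  obtain ⟨p, q, hpq, rfl⟩ := h
  refine Set.ncard_pair fun hpq' => ?_
  subst hpq'
  exact Set.disjoint_left.1 hpq (out_fst_mem p) (out_fst_mem p)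

lemma finite (h : IsDisjointPair X) : X.Finite := by
  obtain ⟨p, q, -, rfl⟩ := h
  exact Set.toFinite _

lemma disjoint_of_mem (h : IsDisjointPair X) {a b : Sym2 V} (ha : a ∈ X) (hb : b ∈ X)
    (hab : a ≠ b) : Disjoint (a : Set V) b := by
  obtain ⟨p, q, hpq, rfl⟩ := h
  rcases ha with rfl | rfl <;> rcases hb with rfl | rfl
  exacts [absurd rfl hab, hpq, hpq.symm, absurd rfl hab]

lemma exists_disjoint_of_mem (h : IsDisjointPair X) {a : Sym2 V} (ha : a ∈ X) :
    ∃ b ∈ X, Disjoint (b : Set V) a := by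
  obtain ⟨p, q, hpq, rfl⟩ := h
  rcases ha with rfl | rfl
  exacts [⟨q, by simp, hpq.symm⟩, ⟨p, by simp, hpq⟩]

lemma eq_of_ncard_inter (hX : IsDisjointPair X) (hY : IsDisjointPair Y)
    (h : (X ∩ Y).ncard = 2) : X = Y := by
  have hXY : X ∩ Y = X := Set.eq_of_subset_of_ncard_le Set.inter_subset_left
    (by rw [h, hX.ncard_eq]) hX.finite
  have hYX : X ∩ Y = Y := Set.eq_of_subset_of_ncard_le Set.inter_subset_right
    (by rw [h, hY.ncard_eq]) hY.finite
  rw [← hXY, hYX]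

end IsDisjointPair

/-- A 2-switch seen through edge sets: the four toggled pairs form an alternating 4-cycle. -/
structure IsSwitch (A B : Set (Sym2 V)) : Prop where
  removed : IsDisjointPair (A \ B)
  added : IsDisjointPair (B \ A)
  not_disjoint : ∀ e ∈ A \ B, ∀ f ∈ B \ A, ¬Disjoint (e : Set V) f

namespace IsSwitch

variable {A B B₁ B₂ B₃ : Set (Sym2 V)}

lemma symm (h : IsSwitch A B) : IsSwitch B A :=
  ⟨h.added, h.removed, fun e he f hf hd => h.not_disjoint f hf e he hd.symm⟩

lemma compl (h : IsSwitch A B) : IsSwitch Aᶜ Bᶜ := by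
  refine ⟨?_, ?_, ?_⟩ <;> simp only [compl_sdiff_compl]
  exacts [h.added, h.removed, h.symm.not_disjoint]

lemma sdiff_subset_crossPairs (h : IsSwitch A B) {p q : Sym2 V} (hpq : A \ B = {p, q}) :
    B \ A ⊆ crossPairs p q := fun f hf =>
  ⟨fun hd => h.not_disjoint p (by simp [hpq]) f hf hd.symm,
    fun hd => h.not_disjoint q (by simp [hpq]) f hf hd.symm⟩

lemma ncard_inter_add_ncard_inter (h₁ : IsSwitch A B₁) (h₂ : IsSwitch A B₂)
    (h₁₂ : IsSwitch B₁ B₂) :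
    ((A \ B₁) ∩ (A \ B₂)).ncard + ((B₁ \ A) ∩ (B₂ \ A)).ncard = 2 := by
  have hsplit : B₁ \ B₂ = ((A \ B₂) \ (A \ B₁)) ∪ ((B₁ \ A) \ (B₂ \ A)) := by
    ext e; simp only [Set.mem_sdiff, Set.mem_union]; tauto
  have hdisj : Disjoint ((A \ B₂) \ (A \ B₁)) ((B₁ \ A) \ (B₂ \ A)) :=
    Set.disjoint_left.2 fun _ h h' => h'.1.2 h.1.1
  have hcard := Set.ncard_union_eq hdisj (h₂.removed.finite.sdiff) (h₁.added.finite.sdiff)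
  rw [← hsplit, h₁₂.removed.ncard_eq] at hcard
  have hP := Set.ncard_inter_add_ncard_sdiff_eq_ncard (A \ B₂) (A \ B₁) h₂.removed.finite
  have hQ := Set.ncard_inter_add_ncard_sdiff_eq_ncard (B₁ \ A) (B₂ \ A) h₁.added.finite
  rw [h₂.removed.ncard_eq, Set.inter_comm] at hP
  rw [h₁.added.ncard_eq] at hQ
  omega

lemma disjoint_sdiff_of_sdiff_eq (h₁ : IsSwitch A B₁) (h₂ : IsSwitch A B₂)
    (h₁₂ : IsSwitch B₁ B₂) (hP : A \ B₁ = A \ B₂) : Disjoint (B₁ \ A) (B₂ \ A) := by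
  have := h₁.ncard_inter_add_ncard_inter h₂ h₁₂
  rw [hP, Set.inter_self, h₂.removed.ncard_eq] at this
  exact Set.disjoint_iff_inter_eq_empty.2
    ((Set.ncard_eq_zero (h₁.added.finite.inter_of_left _)).1 (by omega))

lemma not_disjoint_of_sdiff_eq (h₁ : IsSwitch A B₁) (h₂ : IsSwitch A B₂)
    (h₁₂ : IsSwitch B₁ B₂) (hP : A \ B₁ = A \ B₂) {a b : Sym2 V} (ha : a ∈ B₁ \ A)
    (hb : b ∈ B₂ \ A) : ¬Disjoint (b : Set V) a := by
  intro hba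
  obtain ⟨p, q, hpq, hP₁⟩ := h₁.removed
  obtain ⟨a', ha', ha'a⟩ := h₁.added.exists_disjoint_of_mem ha
  have hba' : b = a' := eq_of_mem_crossPairs_of_disjoint hpq (h₁.sdiff_subset_crossPairs hP₁ ha)
    (h₂.sdiff_subset_crossPairs (hP ▸ hP₁) hb) (h₁.sdiff_subset_crossPairs hP₁ ha') hba ha'a
  subst hba'
  exact Set.disjoint_left.1 (h₁.disjoint_sdiff_of_sdiff_eq h₂ h₁₂ hP) ha' hb

lemma sdiff_ne_sdiff_of_sdiff_eq (h₁ : IsSwitch A B₁) (h₂ : IsSwitch A B₂)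
    (h₃ : IsSwitch A B₃) (h₁₂ : IsSwitch B₁ B₂) (h₁₃ : IsSwitch B₁ B₃) (h₂₃ : IsSwitch B₂ B₃)
    (hP : A \ B₁ = A \ B₂) : A \ B₁ ≠ A \ B₃ := by
  intro hP'
  obtain ⟨p, q, hpq, hP₁⟩ := h₁.removed
  have hcard : ((B₁ \ A) ∪ (B₂ \ A) ∪ (B₃ \ A)).ncard = 6 := by
    rw [Set.ncard_union_eq (Set.disjoint_union_left.2 ⟨h₁.disjoint_sdiff_of_sdiff_eq h₃ h₁₃ hP',
        h₂.disjoint_sdiff_of_sdiff_eq h₃ h₂₃ (hP.symm.trans hP')⟩)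
        (h₁.added.finite.union h₂.added.finite) h₃.added.finite,
      Set.ncard_union_eq (h₁.disjoint_sdiff_of_sdiff_eq h₂ h₁₂ hP) h₁.added.finite
        h₂.added.finite, h₁.added.ncard_eq, h₂.added.ncard_eq, h₃.added.ncard_eq]
  have hsub : (B₁ \ A) ∪ (B₂ \ A) ∪ (B₃ \ A) ⊆ crossPairs p q :=
    Set.union_subset (Set.union_subset (h₁.sdiff_subset_crossPairs hP₁)
      (h₂.sdiff_subset_crossPairs (hP ▸ hP₁))) (h₃.sdiff_subset_crossPairs (hP' ▸ hP₁))
  have := Set.ncard_le_ncard hsub (crossPairs_finite hpq)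
  have := ncard_crossPairs_le hpq
  omega

lemma sdiff_ne_sdiff (h₁ : IsSwitch A B₁) (h₂ : IsSwitch A B₂) (h₃ : IsSwitch A B₃)
    (h₁₂ : IsSwitch B₁ B₂) (h₁₃ : IsSwitch B₁ B₃) (h₂₃ : IsSwitch B₂ B₃) :
    A \ B₁ ≠ A \ B₂ := by
  intro hP
  have hP₁₃ : ((A \ B₁) ∩ (A \ B₃)).ncard ≤ 1 := by
    have := Set.ncard_le_ncard (Set.inter_subset_left (t := A \ B₃)) h₁.removed.finite
    rw [h₁.removed.ncard_eq] at this
    by_contra! h2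
    exact h₁.sdiff_ne_sdiff_of_sdiff_eq h₂ h₃ h₁₂ h₁₃ h₂₃ hP
      (h₁.removed.eq_of_ncard_inter h₃.removed (by omega))
  have hI₁₃ := h₁.ncard_inter_add_ncard_inter h₃ h₁₃
  have hI₂₃ := h₂.ncard_inter_add_ncard_inter h₃ h₂₃
  rw [← hP] at hI₂₃
  obtain ⟨a, ha₁, ha₃⟩ := (Set.ncard_pos (h₁.added.finite.inter_of_left (B₃ \ A))).1 (by omega)
  obtain ⟨b, hb₂, hb₃⟩ := (Set.ncard_pos (h₂.added.finite.inter_of_left (B₃ \ A))).1 (by omega)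
  have hab : a ≠ b := by
    rintro rfl
    exact Set.disjoint_left.1 (h₁.disjoint_sdiff_of_sdiff_eq h₂ h₁₂ hP) ha₁ hb₂
  exact h₁.not_disjoint_of_sdiff_eq h₂ h₁₂ hP ha₁ hb₂
    (h₃.added.disjoint_of_mem hb₃ ha₃ hab.symm)

lemma ncard_inter_sdiff_eq_one (h₁ : IsSwitch A B₁) (h₂ : IsSwitch A B₂) (h₃ : IsSwitch A B₃)
    (h₁₂ : IsSwitch B₁ B₂) (h₁₃ : IsSwitch B₁ B₃) (h₂₃ : IsSwitch B₂ B₃) :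
    ((A \ B₁) ∩ (A \ B₂)).ncard = 1 := by
  have hI := h₁.ncard_inter_add_ncard_inter h₂ h₁₂
  have hP : ((A \ B₁) ∩ (A \ B₂)).ncard ≠ 2 := fun h =>
    sdiff_ne_sdiff h₁ h₂ h₃ h₁₂ h₁₃ h₂₃ (h₁.removed.eq_of_ncard_inter h₂.removed h)
  have hQ : ((B₁ \ A) ∩ (B₂ \ A)).ncard ≠ 2 := fun h => by
    refine sdiff_ne_sdiff h₁.compl h₂.compl h₃.compl h₁₂.compl h₁₃.compl h₂₃.compl ?_
    simpa only [compl_sdiff_compl] using h₁.added.eq_of_ncard_inter h₂.added h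
  omega

lemma eq_of_inter_sdiff_eq_singleton (h₃ : IsSwitch A B₃) (h₁₂ : IsSwitch B₁ B₂)
    {x₁₂ x₁₃ x₂₃ : Sym2 V} (hx₁₂ : (A \ B₁) ∩ (A \ B₂) = {x₁₂})
    (hx₁₃ : (A \ B₁) ∩ (A \ B₃) = {x₁₃}) (hx₂₃ : (A \ B₂) ∩ (A \ B₃) = {x₂₃}) :
    x₁₂ = x₁₃ := by
  simp only [Set.ext_iff, Set.mem_inter_iff, Set.mem_sdiff, Set.mem_singleton_iff]
    at hx₁₂ hx₁₃ hx₂₃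
  by_contra hne
  have h₁₃ := (hx₁₃ x₁₃).2 rfl
  have h₂₃ := (hx₂₃ x₂₃).2 rfl
  have hx₂₃B₁ : x₂₃ ∈ B₁ := by
    by_contra hB₁
    exact hne (((hx₁₂ x₂₃).1 ⟨⟨h₂₃.1.1, hB₁⟩, h₂₃.1⟩).symm.trans
      ((hx₁₃ x₂₃).1 ⟨⟨h₂₃.1.1, hB₁⟩, h₂₃.2⟩))
  have hx₁₃B₂ : x₁₃ ∈ B₂ := by
    by_contra hB₂
    exact hne ((hx₁₂ x₁₃).1 ⟨h₁₃.1, h₁₃.1.1, hB₂⟩).symm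
  have hne' : x₁₃ ≠ x₂₃ := by rintro rfl; exact h₂₃.1.2 hx₁₃B₂
  exact h₁₂.not_disjoint x₂₃ ⟨hx₂₃B₁, h₂₃.1.2⟩ x₁₃ ⟨hx₁₃B₂, h₁₃.1.2⟩
    (h₃.removed.disjoint_of_mem h₂₃.2 h₁₃.2 hne'.symm)

theorem exists_inter_sdiff_eq_singleton (h₁ : IsSwitch A B₁) (h₂ : IsSwitch A B₂)
    (h₃ : IsSwitch A B₃) (h₁₂ : IsSwitch B₁ B₂) (h₁₃ : IsSwitch B₁ B₃) (h₂₃ : IsSwitch B₂ B₃) :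
    ∃ e, (A \ B₁) ∩ (A \ B₂) = {e} ∧ e ∉ B₃ := by
  obtain ⟨x₁₂, hx₁₂⟩ := Set.ncard_eq_one.1 (ncard_inter_sdiff_eq_one h₁ h₂ h₃ h₁₂ h₁₃ h₂₃)
  obtain ⟨x₁₃, hx₁₃⟩ := Set.ncard_eq_one.1 (ncard_inter_sdiff_eq_one h₁ h₃ h₂ h₁₃ h₁₂ h₂₃.symm)
  obtain ⟨x₂₃, hx₂₃⟩ :=
    Set.ncard_eq_one.1 (ncard_inter_sdiff_eq_one h₂ h₃ h₁ h₂₃ h₁₂.symm h₁₃.symm)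
  refine ⟨x₁₂, hx₁₂, ?_⟩
  rw [eq_of_inter_sdiff_eq_singleton h₃ h₁₂ hx₁₂ hx₁₃ hx₂₃]
  exact (hx₁₃.symm.subset rfl).2.2

end IsSwitch

lemma IsTwoSwitchAt.isSwitch {G G' : SimpleGraph V} {u v w x : V}
    (h : IsTwoSwitchAt G G' u v w x) : IsSwitch G.edgeSet G'.edgeSet := by
  obtain ⟨huv, huw, hux, hvw, hvx, hwx, auv, awx, naux, navw, htog⟩ := h
  have hG' : G'.edgeSet = G.edgeSet ∆ {s(u, v), s(w, x), s(u, x), s(v, w)} := by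
    ext e
    induction e using Sym2.ind with | _ a b =>
    simp only [pairEq, ← Sym2.eq_iff] at htog
    exact htog a b
  have hremoved : G.edgeSet \ G'.edgeSet = {s(u, v), s(w, x)} := by
    rw [hG', sdiff_symmDiff_left]
    ext e
    simp only [Set.inf_eq_inter, Set.mem_inter_iff, Set.mem_insert_iff, Set.mem_singleton_iff]
    aesop
  have hadded : G'.edgeSet \ G.edgeSet = {s(u, x), s(v, w)} := by
    rw [hG', symmDiff_sdiff_left]
    ext e
    simp only [Set.mem_sdiff, Set.mem_insert_iff, Set.mem_singleton_iff]
    aesop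
  refine ⟨⟨s(u, v), s(w, x), ?_, hremoved⟩, ⟨s(u, x), s(v, w), ?_, hadded⟩, ?_⟩
  · simp [Set.disjoint_left, *]
  · simp [Set.disjoint_left, *, Ne.symm]
  · rw [hremoved, hadded]
    simp [Set.not_disjoint_iff]

def vennRegion {ι α : Type*} (E : ι → Set α) (I : Finset ι) : Set α :=
  {e | ∀ i, e ∈ E i ↔ i ∈ I}

lemma vennRegion_compl {ι α : Type*} [Fintype ι] [DecidableEq ι] (E : ι → Set α)
    (I : Finset ι) : vennRegion (fun i => (E i)ᶜ) I = vennRegion E Iᶜ := by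
  ext e
  exact forall_congr' fun i => by
    rw [Set.mem_compl_iff, Finset.mem_compl, not_iff_comm]
    exact iff_comm

section FourSwitches

variable {E : Fin 4 → Set (Sym2 V)}

lemma exists_vennRegion_singleton_eq (hE : ∀ i j, i ≠ j → IsSwitch (E i) (E j)) (i : Fin 4) :
    ∃ e, vennRegion E {i} = {e} := by
  obtain ⟨j, k, l, hjk, hjl, hkl, hijkl⟩ :=
    Finset.card_eq_three.1 (show ({i}ᶜ : Finset (Fin 4)).card = 3 by
      rw [Finset.card_compl, Finset.card_singleton, Fintype.card_fin])
  have hne : ∀ n, n ≠ i ↔ n = j ∨ n = k ∨ n = l := fun n => by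
    simpa using Finset.ext_iff.1 hijkl n
  have hj : j ≠ i := (hne j).2 (.inl rfl)
  have hk : k ≠ i := (hne k).2 (.inr (.inl rfl))
  have hl : l ≠ i := (hne l).2 (.inr (.inr rfl))
  obtain ⟨x, hx, hxl⟩ := IsSwitch.exists_inter_sdiff_eq_singleton (hE i j hj.symm)
    (hE i k hk.symm) (hE i l hl.symm) (hE j k hjk) (hE j l hjl) (hE k l hkl)
  have hxjk := hx.symm.subset rfl
  refine ⟨x, Set.eq_singleton_iff_unique_mem.2 ⟨fun n => ?_, fun e he => ?_⟩⟩
  · rw [Finset.mem_singleton]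
    by_cases hn : n = i
    · simp [hn, hxjk.1.1]
    · rcases (hne n).1 hn with rfl | rfl | rfl
      exacts [iff_of_false hxjk.1.2 hn, iff_of_false hxjk.2.2 hn, iff_of_false hxl hn]
  · have h := fun n => (he n).trans Finset.mem_singleton
    rw [← Set.mem_singleton_iff, ← hx]
    exact ⟨⟨(h i).2 rfl, fun h' => hj ((h j).1 h')⟩, (h i).2 rfl, fun h' => hk ((h k).1 h')⟩

lemma vennRegion_eq_empty_of_card_eq_two (hE : ∀ i j, i ≠ j → IsSwitch (E i) (E j))
    {I : Finset (Fin 4)} (hI : I.card = 2) : vennRegion E I = ∅ := by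
  obtain ⟨a, b, hab, rfl⟩ := Finset.card_eq_two.1 hI
  obtain ⟨k, l, hkl, hkl'⟩ := Finset.card_eq_two.1
    (show ({a, b}ᶜ : Finset (Fin 4)).card = 2 by rw [Finset.card_compl, hI, Fintype.card_fin])
  have hout : ∀ n, ¬(n = a ∨ n = b) ↔ n = k ∨ n = l := fun n => by
    simpa using Finset.ext_iff.1 hkl' n
  have hk := not_or.1 ((hout k).2 (.inl rfl))
  have hl := not_or.1 ((hout l).2 (.inr rfl))
  obtain ⟨x, hx, hxb⟩ := IsSwitch.exists_inter_sdiff_eq_singleton (hE a k (Ne.symm hk.1))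
    (hE a l (Ne.symm hl.1)) (hE a b hab) (hE k l hkl) (hE k b hk.2) (hE l b hl.2)
  refine Set.eq_empty_iff_forall_notMem.2 fun e he => hxb ?_
  have h := fun n => (he n).trans (by simp : n ∈ ({a, b} : Finset (Fin 4)) ↔ n = a ∨ n = b)
  have hex : e ∈ (E a \ E k) ∩ (E a \ E l) :=
    ⟨⟨(h a).2 (.inl rfl), fun h' => (hout k).2 (.inl rfl) ((h k).1 h')⟩,
      (h a).2 (.inl rfl), fun h' => (hout l).2 (.inr rfl) ((h l).1 h')⟩
  rw [hx, Set.mem_singleton_iff] at hex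
  exact hex ▸ (h b).2 (.inr rfl)

end FourSwitches

end

theorem venn_counts_general {V : Type*} (R : Fin 4 → SimpleGraph V)
    (hsw : ∀ i j, i ≠ j → IsTwoSwitch (R i) (R j))
    (s : Finset (Fin 4) → ℕ)
    (hs : ∀ I, s I = {e : Sym2 V | ∀ i, e ∈ (R i).edgeSet ↔ i ∈ I}.ncard) :
    (∀ i, s {i} = 1) ∧ (∀ i, s ({i}ᶜ) = 1) ∧ (∀ I, I.card = 2 → s I = 0) := by
  have hE : ∀ i j, i ≠ j → IsSwitch (R i).edgeSet (R j).edgeSet := fun i j hij =>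
    let ⟨_, _, _, _, h⟩ := hsw i j hij
    h.isSwitch
  refine ⟨fun i => ?_, fun i => ?_, fun I hI => ?_⟩ <;> rw [hs]
  · obtain ⟨e, he⟩ := exists_vennRegion_singleton_eq hE i
    exact (congrArg Set.ncard he).trans (Set.ncard_singleton e)
  · obtain ⟨e, he⟩ := exists_vennRegion_singleton_eq (fun i j hij => (hE i j hij).compl) i
    rw [vennRegion_compl] at he
    exact (congrArg Set.ncard he).trans (Set.ncard_singleton e)
  · exact (congrArg Set.ncard (vennRegion_eq_empty_of_card_eq_two hE hI)).trans (Set.ncard_empty _)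

/-- for four distinct realizations pairwise related by a 2-switch, each with `m`
edges, the number `s I` of vertex pairs that are edges of exactly the `R i` with `i ∈ I`
satisfies: `s {i} = 1`, `s ({i}ᶜ) = 1`, and `s I = 0` for every 2-element `I`. -/
theorem venn_counts {V : Type*} [Fintype V] (R : Fin 4 → SimpleGraph V) (m : ℕ)
    (hdist : ∀ i j, i ≠ j → R i ≠ R j)
    (hsw : ∀ i j, i ≠ j → IsTwoSwitch (R i) (R j))
    (hm : ∀ i, (R i).edgeSet.ncard = m)
    (s : Finset (Fin 4) → ℕ)
    (hs : ∀ I, s I = {e : Sym2 V | ∀ i, e ∈ (R i).edgeSet ↔ i ∈ I}.ncard) :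
    (∀ i, s {i} = 1) ∧ (∀ i, s ({i}ᶜ) = 1) ∧ (∀ I, I.card = 2 → s I = 0) :=
  venn_counts_general R hsw s hs
end

section
/- Let d be a degree sequence of a finite simple graph and suppose a realization R of d contains a dial configuration D_n with n ≥ 2: that is, there exist distinct vertices u, v, w_1, ..., w_n such that u is adjacent to w_1 and to no other w_i, v is adjacent to every w_i except w_1. Then there exist n distinct labeled realizations of d (including R) that are pairwise related by a single 2-switch. -/
/-!
For each index `k` let `G k := dialGraph R u v w k` be `R` with the dial turned to `w k`: `u` is
joined to `w k` and to no other `w m`, `v` to every `w m` except `w k`, and all other pairs are as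
in `R`. The dial configuration says exactly that `G i₀ = R`. For `k ≠ l`, `G l` arises from `G k`
by the 2-switch on the edges `u w k`, `v w l`, and 2-switches preserve degrees, so the `G k` form
the required family.
-/

section

variable {V : Type*}

theorem IsTwoSwitchAt.adj_iff_s6 {G G' : SimpleGraph V} {u v w x : V}
    (h : IsTwoSwitchAt G G' u v w x) (a b : V) : G'.Adj a b ↔
      Xor (G.Adj a b) (pairEq a b u v ∨ pairEq a b w x ∨ pairEq a b u x ∨ pairEq a b v w) :=
  h.2.2.2.2.2.2.2.2.2.2 a b

theorem pairEq_swap_right_s6 {a b c d : V} : pairEq a b d c ↔ pairEq a b c d := by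
  unfold pairEq; tauto

theorem pairEq_swap_left {a b c d : V} : pairEq b a c d ↔ pairEq a b c d := by
  unfold pairEq; tauto

theorem ndeg_eq_of_adj_iff_swap [DecidableEq V] {G G' : SimpleGraph V} {y c d : V}
    (h : ∀ b, G'.Adj y b ↔ G.Adj y (Equiv.swap c d b)) : ndeg G' y = ndeg G y := by
  have hN : G'.neighborSet y = Equiv.swap c d ⁻¹' G.neighborSet y := Set.ext h
  rw [ndeg, hN, Set.ncard_preimage_of_injective_subset_range (Equiv.injective _) (by simp), ndeg]

theorem ndeg_eq_of_toggle {G G' : SimpleGraph V} {y c d : V} (hd : G.Adj y d)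
    (hc : ¬ G.Adj y c) (h : ∀ b, G'.Adj y b ↔ Xor (G.Adj y b) (b = d ∨ b = c)) :
    ndeg G' y = ndeg G y := by
  classical
  refine ndeg_eq_of_adj_iff_swap (c := d) (d := c) fun b => ?_
  rw [h, Equiv.swap_apply_def]
  split_ifs <;> subst_vars <;> simp_all [xor_def]

theorem IsTwoSwitchAt.ndeg_eq {G G' : SimpleGraph V} {u v w x : V}
    (h : IsTwoSwitchAt G G' u v w x) (y : V) : ndeg G' y = ndeg G y := by
  obtain ⟨huv, huw, hux, hvw, hvx, hwx, huv_adj, hwx_adj, hux_adj, hvw_adj, -⟩ := id h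
  by_cases hyu : y = u
  · subst hyu
    exact ndeg_eq_of_toggle huv_adj hux_adj fun b => by
      simpa [pairEq, huv, huw, hux] using h.adj_iff_s6 y b
  by_cases hyv : y = v
  · subst hyv
    exact ndeg_eq_of_toggle huv_adj.symm hvw_adj fun b => by
      simpa [pairEq, huv.symm, hvw, hvx] using h.adj_iff_s6 y b
  by_cases hyw : y = w
  · subst hyw
    exact ndeg_eq_of_toggle hwx_adj (hvw_adj ∘ .symm) fun b => by
      simpa [pairEq, huw.symm, hvw.symm, hwx] using h.adj_iff_s6 y b
  by_cases hyx : y = x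
  · subst hyx
    exact ndeg_eq_of_toggle hwx_adj.symm (hux_adj ∘ .symm) fun b => by
      simpa [pairEq, hux.symm, hvx.symm, hwx.symm] using h.adj_iff_s6 y b
  rw [ndeg, ndeg]
  congr 1
  ext b
  simpa [pairEq, xor_def, hyu, hyv, hyw, hyx] using h.adj_iff_s6 y b

variable {ι : Type*}

def IsDialPair (u v : V) (w : ι → V) (a b : V) : Prop :=
  ∃ m, pairEq a b u (w m) ∨ pairEq a b v (w m)

@[elab_as_elim]
theorem IsDialPair.induction_on_symm {u v : V} {w : ι → V} {P : V → V → Prop}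
    (hP : ∀ a b, P a b → P b a) (hu : ∀ m, P u (w m)) (hv : ∀ m, P v (w m))
    {a b : V} (h : IsDialPair u v w a b) : P a b := by
  obtain ⟨m, (⟨rfl, rfl⟩ | ⟨rfl, rfl⟩) | (⟨rfl, rfl⟩ | ⟨rfl, rfl⟩)⟩ := h
  exacts [hu m, hP _ _ (hu m), hv m, hP _ _ (hv m)]

def dialGraph (R : SimpleGraph V) (u v : V) (w : ι → V) (k : ι) : SimpleGraph V where
  Adj a b := a ≠ b ∧ (pairEq a b u (w k) ∨ (∃ m ≠ k, pairEq a b v (w m)) ∨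
    (R.Adj a b ∧ ¬ IsDialPair u v w a b))
  symm := ⟨fun a b h => ⟨h.1.symm, by
    simpa only [pairEq_swap_left, R.adj_comm a b, IsDialPair] using h.2⟩⟩
  loopless := ⟨fun _ h => h.1 rfl⟩

section

variable {R : SimpleGraph V} {u v : V} {w : ι → V} {k : ι}

theorem dialGraph_adj_left (hw : Function.Injective w) (huv : u ≠ v) (hu : ∀ i, u ≠ w i)
    (m : ι) : (dialGraph R u v w k).Adj u (w m) ↔ m = k := by
  have : IsDialPair u v w u (w m) := ⟨m, .inl (.inl ⟨rfl, rfl⟩)⟩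
  simp [dialGraph, this, pairEq, hw.eq_iff, huv, hu]

theorem dialGraph_adj_right (hw : Function.Injective w) (huv : u ≠ v) (hv : ∀ i, v ≠ w i)
    (m : ι) : (dialGraph R u v w k).Adj v (w m) ↔ m ≠ k := by
  have : IsDialPair u v w v (w m) := ⟨m, .inr (.inl ⟨rfl, rfl⟩)⟩
  simp [dialGraph, this, pairEq, hw.eq_iff, huv.symm, hv]

theorem dialGraph_adj_of_not_isDialPair {a b : V} (h : ¬ IsDialPair u v w a b) :
    (dialGraph R u v w k).Adj a b ↔ R.Adj a b := by
  have hu : ¬ pairEq a b u (w k) := fun h' => h ⟨k, .inl h'⟩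
  have hv : ¬ ∃ m ≠ k, pairEq a b v (w m) := fun ⟨m, _, h'⟩ => h ⟨m, .inr h'⟩
  simp only [dialGraph, hu, hv, h, false_or, not_false_eq_true, and_true]
  exact and_iff_right_of_imp SimpleGraph.Adj.ne

theorem dialGraph_injective (hw : Function.Injective w) (huv : u ≠ v) (hu : ∀ i, u ≠ w i) :
    Function.Injective (dialGraph R u v w) := fun k _ hkl =>
  (dialGraph_adj_left hw huv hu k).mp (hkl ▸ (dialGraph_adj_left hw huv hu k).mpr rfl)

theorem dialGraph_eq_self (hw : Function.Injective w) (huv : u ≠ v) (hu : ∀ i, u ≠ w i)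
    (hv : ∀ i, v ≠ w i) (hR_left : ∀ m, R.Adj u (w m) ↔ m = k)
    (hR_right : ∀ m, R.Adj v (w m) ↔ m ≠ k) : dialGraph R u v w k = R := by
  ext a b
  by_cases hab : IsDialPair u v w a b
  · refine IsDialPair.induction_on_symm (fun a b h => ?_) (fun m => ?_) (fun m => ?_) hab
    · rwa [SimpleGraph.adj_comm, R.adj_comm]
    · rw [dialGraph_adj_left hw huv hu, hR_left]
    · rw [dialGraph_adj_right hw huv hv, hR_right]
  · exact dialGraph_adj_of_not_isDialPair hab

theorem dialGraph_adj_iff_xor (hw : Function.Injective w) (huv : u ≠ v) (hu : ∀ i, u ≠ w i)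
    (hv : ∀ i, v ≠ w i) {l : ι} (hkl : k ≠ l) (a b : V) :
    (dialGraph R u v w l).Adj a b ↔ Xor ((dialGraph R u v w k).Adj a b)
      (pairEq a b u (w k) ∨ pairEq a b v (w l) ∨ pairEq a b u (w l) ∨
        pairEq a b (w k) v) := by
  by_cases hab : IsDialPair u v w a b
  · refine IsDialPair.induction_on_symm (fun a b h => ?_) (fun m => ?_) (fun m => ?_) hab
    · simpa only [SimpleGraph.adj_comm _ b a, pairEq_swap_left (a := a)] using h
    · rw [dialGraph_adj_left hw huv hu, dialGraph_adj_left hw huv hu]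
      simp only [pairEq, hw.eq_iff, true_and, hu, false_and, or_false, huv, or_self, false_or]
      grind
    · rw [dialGraph_adj_right hw huv hv, dialGraph_adj_right hw huv hv]
      simp only [ne_eq, pairEq, huv.symm, hw.eq_iff, false_and, hv, or_self, true_and, or_false,
        false_or, xor_not_left, iff_or_self]
      grind
  · have hT : ¬ (pairEq a b u (w k) ∨ pairEq a b v (w l) ∨ pairEq a b u (w l) ∨
        pairEq a b (w k) v) := by
      rintro (h | h | h | h)
      exacts [hab ⟨k, .inl h⟩, hab ⟨l, .inr h⟩, hab ⟨l, .inl h⟩,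
        hab ⟨k, .inr (pairEq_swap_right_s6.mp h)⟩]
    simp only [dialGraph_adj_of_not_isDialPair hab, hT, xor_def, and_true, not_false_eq_true,
      false_and, or_false]

theorem isTwoSwitchAt_dialGraph (hw : Function.Injective w) (huv : u ≠ v) (hu : ∀ i, u ≠ w i)
    (hv : ∀ i, v ≠ w i) {l : ι} (hkl : k ≠ l) :
    IsTwoSwitchAt (dialGraph R u v w k) (dialGraph R u v w l) u (w k) v (w l) :=
  ⟨hu k, huv, hu l, (hv k).symm, hw.ne hkl, hv l, (dialGraph_adj_left hw huv hu k).mpr rfl,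
    (dialGraph_adj_right hw huv hv l).mpr hkl.symm,
    fun h => hkl ((dialGraph_adj_left hw huv hu l).mp h).symm,
    fun h => (dialGraph_adj_right hw huv hv k).mp h.symm rfl,
    dialGraph_adj_iff_xor hw huv hu hv hkl⟩

end

end

theorem dial_config_gives_clique_general {V : Type*} (R : SimpleGraph V)
    (n : ℕ) (u v : V) (w : Fin n → V) (i₀ : Fin n)
    (hw : Function.Injective w) (huv : u ≠ v)
    (hu : ∀ i, u ≠ w i) (hv : ∀ i, v ≠ w i)
    (h1 : R.Adj u (w i₀)) (h2 : ∀ i, i ≠ i₀ → ¬ R.Adj u (w i))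
    (h3 : ¬ R.Adj v (w i₀)) (h4 : ∀ i, i ≠ i₀ → R.Adj v (w i)) :
    ∃ f : Fin n → SimpleGraph V, Function.Injective f ∧ (∃ i, f i = R) ∧
      (∀ i, ∀ y : V, ndeg (f i) y = ndeg R y) ∧
      (∀ i j, i ≠ j → IsTwoSwitch (f i) (f j)) := by
  have hR : dialGraph R u v w i₀ = R :=
    dialGraph_eq_self hw huv hu hv
      (fun m => ⟨fun h => not_not.mp fun hm => h2 m hm h, by rintro rfl; exact h1⟩)
      (fun m => ⟨by rintro h rfl; exact h3 h, h4 m⟩)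
  refine ⟨dialGraph R u v w, dialGraph_injective hw huv hu, ⟨i₀, hR⟩, fun i y => ?_,
    fun i j hij => ⟨_, _, _, _, isTwoSwitchAt_dialGraph hw huv hu hv hij⟩⟩
  rcases eq_or_ne i i₀ with rfl | hi
  · rw [hR]
  · exact ((isTwoSwitchAt_dialGraph hw huv hu hv hi.symm).ndeg_eq y).trans (by rw [hR])

/-- if a realization `R` contains the dial configuration `D_n` (`n ≥ 2`), i.e.
distinct vertices `u, v, w i` with `u` adjacent to `w i₀` and no other `w i`, and `v` adjacent
to every `w i` except `w i₀`, then there are `n` distinct graphs with the same degrees as `R`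
(one of which is `R` itself) that are pairwise related by a single 2-switch. -/
theorem dial_config_gives_clique {V : Type*} [Fintype V] (R : SimpleGraph V)
    (n : ℕ) (hn : 2 ≤ n) (u v : V) (w : Fin n → V) (i₀ : Fin n)
    (hw : Function.Injective w) (huv : u ≠ v)
    (hu : ∀ i, u ≠ w i) (hv : ∀ i, v ≠ w i)
    (h1 : R.Adj u (w i₀)) (h2 : ∀ i, i ≠ i₀ → ¬ R.Adj u (w i))
    (h3 : ¬ R.Adj v (w i₀)) (h4 : ∀ i, i ≠ i₀ → R.Adj v (w i)) :
    ∃ f : Fin n → SimpleGraph V, Function.Injective f ∧ (∃ i, f i = R) ∧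
      (∀ i, ∀ y : V, ndeg (f i) y = ndeg R y) ∧
      (∀ i j, i ≠ j → IsTwoSwitch (f i) (f j)) :=
  dial_config_gives_clique_general R n u v w i₀ hw huv hu hv h1 h2 h3 h4
end

section
/- Let G be a simple graph on vertex set {u, v, w_1, ..., w_n} (n ≥ 2) in which u is adjacent exactly to v and to w_2, ..., w_n; v is adjacent exactly to u, w_1; and the set {w_1, ..., w_n} is independent with each w_i adjacent only as already described. If G' is any graph on the same vertex set with the same degrees related to G by a single 2-switch, then G' has the same form with w_1 replaced by some w_j, j ≠ 1. -/
/-!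
Every edge of the needle graph except `v (w i₀)` contains `u`, so the two disjoint edges that a
2-switch removes are `v (w i₀)` and some `u (w k)` with `k ≠ i₀`. As `u v` is already an edge, the
only admissible new pair of edges is `u (w i₀)`, `v (w k)`: the needle moves to `w k`.
-/

open SimpleGraph

section TwoSwitch

variable {V : Type*} {G G' : SimpleGraph V} {p q r s : V}

lemma pairEq_iff_sym2_eq {a b c d : V} : pairEq a b c d ↔ s(a, b) = s(c, d) :=
  Sym2.eq_iff.symm

lemma pairEq_comm (a b c d : V) : pairEq a b c d ↔ pairEq a b d c := or_comm

lemma IsTwoSwitchAt.symm (h : IsTwoSwitchAt G G' p q r s) : IsTwoSwitchAt G G' r s p q := by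
  obtain ⟨hpq, hpr, hps, hqr, hqs, hrs, hApq, hArs, hnps, hnqr, htog⟩ := h
  refine ⟨hrs, hpr.symm, hqr.symm, hps.symm, hqs.symm, hpq, hArs, hApq,
    fun h => hnqr h.symm, fun h => hnps h.symm,
    fun a b => (htog a b).trans (xor_def.trans (Iff.trans ?_ xor_def.symm))⟩
  rw [pairEq_comm a b r q, pairEq_comm a b s p]
  tauto

lemma IsTwoSwitchAt.swap_s16 (h : IsTwoSwitchAt G G' p q r s) : IsTwoSwitchAt G G' q p s r := by
  obtain ⟨hpq, hpr, hps, hqr, hqs, hrs, hApq, hArs, hnps, hnqr, htog⟩ := h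
  refine ⟨hpq.symm, hqs, hqr, hps, hpr, hrs.symm, hApq.symm, hArs.symm, hnqr, hnps,
    fun a b => (htog a b).trans (xor_def.trans (Iff.trans ?_ xor_def.symm))⟩
  rw [pairEq_comm a b q p, pairEq_comm a b s r]
  tauto

lemma IsTwoSwitchAt.edgeSet_eq (h : IsTwoSwitchAt G G' p q r s) :
    G'.edgeSet = G.edgeSet \ {s(p, q), s(r, s)} ∪ {s(p, s), s(q, r)} := by
  obtain ⟨-, -, -, -, -, -, hApq, hArs, hnps, hnqr, htog⟩ := h
  ext e
  induction e using Sym2.ind with | _ a b => ?_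
  have hpq : s(a, b) = s(p, q) → G.Adj a b := fun h => by rwa [← mem_edgeSet, h]
  have hrs : s(a, b) = s(r, s) → G.Adj a b := fun h => by rwa [← mem_edgeSet, h]
  have hps : s(a, b) = s(p, s) → ¬ G.Adj a b := fun h => by rwa [← mem_edgeSet, h]
  have hqr : s(a, b) = s(q, r) → ¬ G.Adj a b := fun h => by rwa [← mem_edgeSet, h]
  simp only [mem_edgeSet, (htog _ _).trans xor_def, pairEq_iff_sym2_eq, Set.mem_union,
    Set.mem_sdiff, Set.mem_insert_iff, Set.mem_singleton_iff]
  tauto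

end TwoSwitch

section Needle

variable {V ι : Type*} {u v : V} {w : ι → V}

/-- The edges of the realization of `(n, 2, 1^(n))` whose needle is the path `u v (w i₀)`. -/
def needleEdges (u v : V) (w : ι → V) (i₀ : ι) : Set (Sym2 V) :=
  {e | e = s(u, v) ∨ (∃ i, i ≠ i₀ ∧ e = s(u, w i)) ∨ e = s(v, w i₀)}

lemma edgeSet_eq_needleEdges_iff {G : SimpleGraph V} {i₀ : ι} :
    G.edgeSet = needleEdges u v w i₀ ↔ ∀ a b : V, G.Adj a b ↔
      (pairEq a b u v ∨ (∃ i, i ≠ i₀ ∧ pairEq a b u (w i)) ∨ pairEq a b v (w i₀)) := by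
  simp only [Set.ext_iff, Sym2.forall, mem_edgeSet, pairEq_iff_sym2_eq]
  rfl

lemma eq_of_mem_needleEdges_of_not_mem {i₀ : ι} {e : Sym2 V} (he : e ∈ needleEdges u v w i₀)
    (hue : u ∉ e) : e = s(v, w i₀) := by
  rcases he with rfl | ⟨i, -, rfl⟩ | rfl <;> simp_all

lemma needleEdges_switch (hw : Function.Injective w) (hu : ∀ i, u ≠ w i)
    (hv : ∀ i, v ≠ w i) {i₀ k : ι} (hk : k ≠ i₀) :
    needleEdges u v w i₀ \ {s(u, w k), s(v, w i₀)} ∪ {s(u, w i₀), s(w k, v)} =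
      needleEdges u v w k := by
  ext e
  induction e using Sym2.ind with | _ a b => ?_
  simp only [needleEdges, Set.mem_union, Set.mem_sdiff, Set.mem_ofPred_eq, Set.mem_insert_iff,
    Set.mem_singleton_iff, Sym2.eq_iff]
  have hw' : ∀ i j, w i = w j ↔ i = j := fun _ _ => hw.eq_iff
  grind

variable {G G' : SimpleGraph V} {i₀ : ι}

lemma IsTwoSwitchAt.exists_eq_of_edgeSet_eq_needleEdges {q r s : V}
    (h : IsTwoSwitchAt G G' u q r s) (hE : G.edgeSet = needleEdges u v w i₀)
    (huv : u ≠ v) (hu : ∀ i, u ≠ w i) :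
    ∃ k, k ≠ i₀ ∧ q = w k ∧ r = v ∧ s = w i₀ := by
  obtain ⟨-, hur, hus, hqr, hqs, -, hAuq, hArs, hnus, -, -⟩ := h
  rw [← mem_edgeSet, hE] at hAuq hArs hnus
  have hrs : s(r, s) = s(v, w i₀) :=
    eq_of_mem_needleEdges_of_not_mem hArs (by simp [hur, hus])
  obtain ⟨k, hk, rfl⟩ : ∃ k, k ≠ i₀ ∧ q = w k := by
    rcases hAuq with h | ⟨k, hk, h⟩ | h
    · rw [Sym2.congr_right] at h
      subst h
      rcases Sym2.eq_iff.1 hrs with ⟨rfl, -⟩ | ⟨-, rfl⟩ <;> simp_all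
    · exact ⟨k, hk, Sym2.congr_right.1 h⟩
    · rcases Sym2.eq_iff.1 h with ⟨h, -⟩ | ⟨h, -⟩
      exacts [absurd h huv, absurd h (hu i₀)]
  rcases Sym2.eq_iff.1 hrs with ⟨rfl, rfl⟩ | ⟨rfl, rfl⟩
  · exact ⟨k, hk, rfl, rfl, rfl⟩
  · exact absurd (Or.inl rfl) hnus

lemma IsTwoSwitchAt.exists_edgeSet_eq_needleEdges {p q r s : V} (h : IsTwoSwitchAt G G' p q r s)
    (hE : G.edgeSet = needleEdges u v w i₀) (hw : Function.Injective w) (huv : u ≠ v)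
    (hu : ∀ i, u ≠ w i) (hv : ∀ i, v ≠ w i) :
    ∃ k, k ≠ i₀ ∧ G'.edgeSet = needleEdges u v w k := by
  have of_switch_at_u : ∀ {q r s : V}, IsTwoSwitchAt G G' u q r s →
      ∃ k, k ≠ i₀ ∧ G'.edgeSet = needleEdges u v w k := by
    intro q r s h
    obtain ⟨k, hk, rfl, rfl, rfl⟩ := h.exists_eq_of_edgeSet_eq_needleEdges hE huv hu
    exact ⟨k, hk, by rw [h.edgeSet_eq, hE, needleEdges_switch hw hu hv hk]⟩
  have hu_mem : u ∈ s(p, q) ∨ u ∈ s(r, s) := by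
    obtain ⟨-, hpr, hps, -, -, -, hApq, hArs, -, -, -⟩ := h
    rw [← mem_edgeSet, hE] at hApq hArs
    by_contra! hne
    have := (eq_of_mem_needleEdges_of_not_mem hApq hne.1).trans
      (eq_of_mem_needleEdges_of_not_mem hArs hne.2).symm
    rcases Sym2.eq_iff.1 this with ⟨h, -⟩ | ⟨h, -⟩
    exacts [hpr h, hps h]
  simp only [Sym2.mem_iff] at hu_mem
  rcases hu_mem with (rfl | rfl) | (rfl | rfl)
  exacts [of_switch_at_u h, of_switch_at_u h.swap_s16, of_switch_at_u h.symm,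
    of_switch_at_u h.symm.swap_s16]

end Needle

theorem two_switch_moves_needle_general {V : Type*} (n : ℕ)
    (u v : V) (w : Fin n → V) (hw : Function.Injective w) (huv : u ≠ v)
    (hu : ∀ i, u ≠ w i) (hv : ∀ i, v ≠ w i)
    (i₀ : Fin n) (G G' : SimpleGraph V)
    (hG : ∀ a b : V, G.Adj a b ↔
      (pairEq a b u v ∨ (∃ i, i ≠ i₀ ∧ pairEq a b u (w i)) ∨ pairEq a b v (w i₀)))
    (hsw : IsTwoSwitch G G') :
    ∃ j : Fin n, j ≠ i₀ ∧ ∀ a b : V, G'.Adj a b ↔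
      (pairEq a b u v ∨ (∃ i, i ≠ j ∧ pairEq a b u (w i)) ∨ pairEq a b v (w j)) := by
  obtain ⟨p, q, r, s, h⟩ := hsw
  obtain ⟨j, hj, hE'⟩ :=
    h.exists_edgeSet_eq_needleEdges (edgeSet_eq_needleEdges_iff.2 hG) hw huv hu hv
  exact ⟨j, hj, edgeSet_eq_needleEdges_iff.1 hE'⟩

/-- if `G` is the realization of `(n, 2, 1^(n))` whose needle is at `w 0`
(`u` adjacent exactly to `v` and `w i` for `i ≠ 0`, `v` adjacent exactly to `u` and `w 0`,
the `w i` otherwise isolated), and `G'` is any graph on the same vertex set with the same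
degrees obtained from `G` by a single 2-switch, then `G'` has the same form with `w 0`
replaced by some `w j`, `j ≠ 0`. -/
theorem two_switch_moves_needle {V : Type*} [Fintype V] (n : ℕ) (hn : 2 ≤ n)
    (u v : V) (w : Fin n → V) (hw : Function.Injective w) (huv : u ≠ v)
    (hu : ∀ i, u ≠ w i) (hv : ∀ i, v ≠ w i)
    (hall : ∀ x : V, x = u ∨ x = v ∨ ∃ i, x = w i)
    (i₀ : Fin n) (G G' : SimpleGraph V)
    (hG : ∀ a b : V, G.Adj a b ↔
      (pairEq a b u v ∨ (∃ i, i ≠ i₀ ∧ pairEq a b u (w i)) ∨ pairEq a b v (w i₀)))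
    (hdeg : ∀ y : V, ndeg G' y = ndeg G y)
    (hsw : IsTwoSwitch G G') :
    ∃ j : Fin n, j ≠ i₀ ∧ ∀ a b : V, G'.Adj a b ↔
      (pairEq a b u v ∨ (∃ i, i ≠ j ∧ pairEq a b u (w i)) ∨ pairEq a b v (w j)) :=
  two_switch_moves_needle_general n u v w hw huv hu hv i₀ G G' hG hsw
end
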